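/- Let {ι_i : {0,…,n−1} → {0,…,N−1}}_{i=0}^{m−1} be a window partition, let H ≥ 1 with N = H (frequency tokens indexed by {0,…,N−1}), and let D be an N×N real matrix with D·Dᵀ = 1 and Dᵀ·D = 1. With Q, K, V, Õ_i, Ö_i as in Proposition 2 (per-window outputs Õ_i = rowSoftmax(Q̃_i·K̃_iᵀ)·Ṽ_i and padded outputs Ö_i = rowSoftmax(Q̈_i·K̈_iᵀ)·V̈_i), let W be the window-reverse of {Õ_i}. Then W · Dᵀ = Σ_{i=0}^{m−1} (Ö_i · Dᵀ). That is, transforming the window-reversed local-attention output back to the spatial domain by the inverse transform equals the sum over windows of the spatial-domain outputs obtained from each zero-padded (filtered) component. -/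

import Mathlib

open Matrix

/-- Row-wise softmax of a real matrix. -/
noncomputable def rowSoftmax {a b : ℕ} (M : Matrix (Fin a) (Fin b) ℝ) :
    Matrix (Fin a) (Fin b) ℝ :=
  Matrix.of fun i j => Real.exp (M i j) / ∑ j', Real.exp (M i j')

/-- `Ap` is the zero-padding of the `Ĉ×n` matrix `A` along the injection `ι`:
columns of `A` are placed at positions `ι j` and all other columns are zero. -/
def IsZeroPad {C n N : ℕ} (ι : Fin n → Fin N) (A : Matrix (Fin C) (Fin n) ℝ)
    (Ap : Matrix (Fin C) (Fin N) ℝ) : Prop :=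
  (∀ c j, Ap c (ι j) = A c j) ∧ (∀ c k, (∀ j, ι j ≠ k) → Ap c k = 0)

/-- `ι` is a window partition of `N` token positions into `m` windows of size `n`:
each `ι i` is injective, ranges are pairwise disjoint, and the ranges cover everything. -/
def IsWindowPartition {m n N : ℕ} (ι : Fin m → Fin n → Fin N) : Prop :=
  (∀ i, Function.Injective (ι i)) ∧
  (∀ i i', i ≠ i' → ∀ j j', ι i j ≠ ι i' j') ∧
  (∀ k : Fin N, ∃ i j, ι i j = k)

/-- The restriction of a `Ĉ×N` matrix to the window `ι`. -/
def windowRestrict {C n N : ℕ} (ι : Fin n → Fin N) (A : Matrix (Fin C) (Fin N) ℝ) :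
    Matrix (Fin C) (Fin n) ℝ :=
  Matrix.of fun c j => A c (ι j)

/-!
Multiplying by `Dᵀ` is linear, so it suffices that the window-reverse `W` is the sum of the padded
outputs `Ö_i`. The padding of window `i` vanishes off the range of `ι i`, so `Q̈_i K̈_iᵀ = Q̃_i K̃_iᵀ`
and hence `Ö_i` is the zero-padding of `Õ_i`; as the windows partition the positions, the sum of
these paddings is the window-reverse of the `Õ_i`.
-/

namespace IsZeroPad

variable {C C' n N : ℕ} {ι : Fin n → Fin N}

theorem mul_transpose {A : Matrix (Fin C) (Fin n) ℝ} {Ap : Matrix (Fin C) (Fin N) ℝ}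
    {B : Matrix (Fin C') (Fin n) ℝ} {Bp : Matrix (Fin C') (Fin N) ℝ}
    (hA : IsZeroPad ι A Ap) (hB : IsZeroPad ι B Bp) (hι : Function.Injective ι) :
    Ap * Bpᵀ = A * Bᵀ := by
  ext c c'
  simp only [mul_apply, transpose_apply]
  refine (Fintype.sum_of_injective ι hι (fun j => A c j * B c' j) (fun k => Ap c k * Bp c' k)
    ?_ fun j => by rw [hA.1, hB.1]).symm
  rintro k hk
  rw [hA.2 c k fun j hj => hk ⟨j, hj⟩, zero_mul]

theorem mul_left {A : Matrix (Fin C) (Fin n) ℝ} {Ap : Matrix (Fin C) (Fin N) ℝ}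
    (hA : IsZeroPad ι A Ap) (M : Matrix (Fin C') (Fin C) ℝ) :
    IsZeroPad ι (M * A) (M * Ap) := by
  constructor
  · intro c j
    simp only [mul_apply, hA.1]
  · intro c k hk
    simp only [mul_apply, hA.2 _ k hk, mul_zero, Finset.sum_const_zero]

end IsZeroPad

theorem IsWindowPartition.eq_sum_of_isZeroPad {C m n N : ℕ} {ι : Fin m → Fin n → Fin N}
    (hι : IsWindowPartition ι) {A : Fin m → Matrix (Fin C) (Fin n) ℝ}
    {P : Fin m → Matrix (Fin C) (Fin N) ℝ} (hP : ∀ i, IsZeroPad (ι i) (A i) (P i))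
    {W : Matrix (Fin C) (Fin N) ℝ} (hW : ∀ i c j, W c (ι i j) = A i c j) :
    W = ∑ i, P i := by
  ext c k
  obtain ⟨i, j, rfl⟩ := hι.2.2 k
  rw [Matrix.sum_apply, Finset.sum_eq_single_of_mem i (Finset.mem_univ i), hW, (hP i).1]
  intro i' _ hi'
  exact (hP i').2 c _ fun j' => hι.2.1 i' i hi' j' j

theorem windowReverse_idct_eq_sum_padded_idct_general {C m n N : ℕ}
    (ι : Fin m → Fin n → Fin N) (hι : IsWindowPartition ι)
    (D : Matrix (Fin N) (Fin N) ℝ)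
    (Q K V : Matrix (Fin C) (Fin N) ℝ)
    (Qp Kp Vp : Fin m → Matrix (Fin C) (Fin N) ℝ)
    (hQp : ∀ i, IsZeroPad (ι i) (windowRestrict (ι i) Q) (Qp i))
    (hKp : ∀ i, IsZeroPad (ι i) (windowRestrict (ι i) K) (Kp i))
    (hVp : ∀ i, IsZeroPad (ι i) (windowRestrict (ι i) V) (Vp i))
    (Ot : Fin m → Matrix (Fin C) (Fin n) ℝ)
    (hOt : ∀ i, Ot i =
      rowSoftmax (windowRestrict (ι i) Q * (windowRestrict (ι i) K)ᵀ) * windowRestrict (ι i) V)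
    (Op : Fin m → Matrix (Fin C) (Fin N) ℝ)
    (hOp : ∀ i, Op i = rowSoftmax (Qp i * (Kp i)ᵀ) * Vp i)
    (W : Matrix (Fin C) (Fin N) ℝ)
    (hW : ∀ i c j, W c (ι i j) = Ot i c j) :
    W * Dᵀ = ∑ i, Op i * Dᵀ := by
  have hpad : ∀ i, IsZeroPad (ι i) (Ot i) (Op i) := fun i => by
    rw [hOp i, hOt i, (hQp i).mul_transpose (hKp i) (hι.1 i)]
    exact (hVp i).mul_left _
  rw [hι.eq_sum_of_isZeroPad hpad hW, Matrix.sum_mul]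

/-- Transforming the window-reversed local-attention output back to the spatial domain
by the inverse transform equals the sum over windows of the spatial-domain outputs
obtained from each zero-padded (filtered) component: `W · Dᵀ = Σ_i Ö_i · Dᵀ`. -/
theorem windowReverse_idct_eq_sum_padded_idct {C m n N : ℕ}
    (ι : Fin m → Fin n → Fin N) (hι : IsWindowPartition ι)
    (H : ℕ) (hH : 1 ≤ H) (hN : N = H)
    (D : Matrix (Fin N) (Fin N) ℝ) (hD1 : D * Dᵀ = 1) (hD2 : Dᵀ * D = 1)
    (Q K V : Matrix (Fin C) (Fin N) ℝ)
    (Qp Kp Vp : Fin m → Matrix (Fin C) (Fin N) ℝ)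
    (hQp : ∀ i, IsZeroPad (ι i) (windowRestrict (ι i) Q) (Qp i))
    (hKp : ∀ i, IsZeroPad (ι i) (windowRestrict (ι i) K) (Kp i))
    (hVp : ∀ i, IsZeroPad (ι i) (windowRestrict (ι i) V) (Vp i))
    (Ot : Fin m → Matrix (Fin C) (Fin n) ℝ)
    (hOt : ∀ i, Ot i =
      rowSoftmax (windowRestrict (ι i) Q * (windowRestrict (ι i) K)ᵀ) * windowRestrict (ι i) V)
    (Op : Fin m → Matrix (Fin C) (Fin N) ℝ)
    (hOp : ∀ i, Op i = rowSoftmax (Qp i * (Kp i)ᵀ) * Vp i)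
    (W : Matrix (Fin C) (Fin N) ℝ)
    (hW : ∀ i c j, W c (ι i j) = Ot i c j) :
    W * Dᵀ = ∑ i, Op i * Dᵀ :=
  windowReverse_idct_eq_sum_padded_idct_general ι hι D Q K V Qp Kp Vp hQp hKp hVp Ot hOt Op hOp W hW
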